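/- Let G = (V,E) be a graph and suppose the corrupt party has budget b ≤ m(G)/2. Then after the edge-removal procedure (removing both endpoints of every edge with a bad report) terminates in i rounds, the largest connected component of the remaining graph H is nonempty and has size strictly greater than the number b − i of corrupt vertices remaining in H; hence all vertices of that component are truthful. -/
import Mathlib


open SimpleGraph

open SimpleGraph

/-- `U` is a `k`-vertex separator of `G`: every connected component of the
induced subgraph on the complement of `U` has at most `k` vertices. -/
def IsKSep {V : Type*} (G : SimpleGraph V) (U : Finset V) (k : ℕ) : Prop :=
  ∀ c : (G.induce ((↑U : Set V)ᶜ)).ConnectedComponent, c.supp.ncard ≤ k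

/-- `S_G(k)`: the minimum size of a `k`-vertex separator of `G`. -/
noncomputable def sepNum {V : Type*} [Fintype V] (G : SimpleGraph V) (k : ℕ) : ℕ :=
  sInf {s | ∃ U : Finset V, IsKSep G U k ∧ U.card = s}

/-- `min_{k ≥ 1} (S_G(k) + k)`. -/
noncomputable def minSep {V : Type*} [Fintype V] (G : SimpleGraph V) : ℕ :=
  sInf {x | ∃ k, 1 ≤ k ∧ x = sepNum G k + k}

/-- A configuration `f` (true = truthful, false = corrupt) is consistent with the
reports `rep` if every truthful vertex reports the true type of each of its neighbors. -/
def Consistent {V : Type*} (G : SimpleGraph V) (f : V → Bool) (rep : V → V → Bool) : Prop :=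
  ∀ u v : V, G.Adj u v → f u = true → rep u v = f v

/-- The number of corrupt vertices in a configuration. -/
noncomputable def badCount {V : Type*} (f : V → Bool) : ℕ :=
  {v : V | f v = false}.ncard

/-- `m(G)`: the minimum budget `b` for which the corrupt party has a placement of at most
`b` corrupt vertices and reports making it impossible to identify a single truthful vertex,
i.e. every vertex is corrupt in some configuration consistent with the reports that has
at most `b` corrupt vertices. -/
noncomputable def mNum {V : Type*} [Fintype V] (G : SimpleGraph V) : ℕ :=
  sInf {b | ∃ rep : V → V → Bool, ∀ v : V, ∃ f : V → Bool,
    Consistent G f rep ∧ badCount f ≤ b ∧ f v = false}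


section Aux

variable {V : Type*}

lemma badCount_eq (f : V → Bool) (s : Set V)
    (h : ∀ v, f v = false ↔ v ∈ s) : badCount f = s.ncard := by
  unfold badCount
  congr 1
  ext v
  simp [h v]

lemma mNum_le_card_sub_one [Fintype V] [DecidableEq V]
    (G : SimpleGraph V) (h2 : 2 ≤ Fintype.card V) :
    mNum G ≤ Fintype.card V - 1 := by
  apply Nat.sInf_le
  refine ⟨fun _ _ => false, fun v => ?_⟩
  obtain ⟨u0, hu0⟩ := Fintype.exists_ne_of_one_lt_card (by omega) v
  refine ⟨fun w => decide (w = u0), ?_, ?_, by simp [hu0.symm]⟩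
  · intro u w hadj hu
    have hu' : u = u0 := by simpa using hu
    have : w ≠ u0 := by rintro rfl; exact hadj.ne' hu'.symm
    simp [this]
  · rw [badCount_eq _ ({u0}ᶜ : Set V) (by intro w; simp)]
    have := Set.ncard_add_ncard_compl ({u0} : Set V)
    have h1 : ({u0} : Set V).ncard = 1 := Set.ncard_singleton u0
    have hn : (Nat.card V) = Fintype.card V := Nat.card_eq_fintype_card
    omega

lemma mNum_le_sep [Fintype V] [DecidableEq V]
    (G : SimpleGraph V) (U : Finset V) (k : ℕ) (hU : IsKSep G U k) :
    mNum G ≤ U.card + k := by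
  classical
  apply Nat.sInf_le
  refine ⟨fun _ w => decide (w ∉ U), fun v => ?_⟩
  by_cases hv : v ∈ U
  · refine ⟨fun w => decide (w ∉ U), ?_, ?_, by simp [hv]⟩
    · intro u w _ _; rfl
    · rw [badCount_eq _ (↑U : Set V) (by intro w; simp), Set.ncard_coe_finset]
      omega
  · have hv' : v ∈ ((↑U : Set V)ᶜ) := by simpa using hv
    set c := (G.induce ((↑U : Set V)ᶜ)).connectedComponentMk ⟨v, hv'⟩ with hc
    refine ⟨fun w => if h : w ∈ ((↑U : Set V)ᶜ) then
        decide ((⟨w, h⟩ : ((↑U : Set V)ᶜ : Set V)) ∉ c.supp) else false, ?_, ?_, ?_⟩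
    · intro u w hadj hu
      dsimp only at hu ⊢
      by_cases hw : w ∈ ((↑U : Set V)ᶜ)
      · rw [dif_pos hw]
        by_cases hu1 : u ∈ ((↑U : Set V)ᶜ)
        swap
        · rw [dif_neg hu1] at hu; exact absurd hu (by simp)
        rw [dif_pos hu1] at hu
        have hu2 : (⟨u, hu1⟩ : ((↑U : Set V)ᶜ : Set V)) ∉ c.supp := by simpa using hu
        have hsame : (G.induce ((↑U : Set V)ᶜ)).Adj ⟨u, hu1⟩ ⟨w, hw⟩ := hadj
        have hnot : (⟨w, hw⟩ : ((↑U : Set V)ᶜ : Set V)) ∉ c.supp := by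
          intro hmem
          apply hu2
          rw [SimpleGraph.ConnectedComponent.mem_supp_iff] at hmem ⊢
          rw [← hmem]
          exact SimpleGraph.ConnectedComponent.sound hsame.reachable
        have hw' : w ∉ U := by simpa using hw
        simp [hnot, hw']
      · have hw' : w ∈ U := by simpa using hw
        rw [dif_neg hw]
        simp [hw']
    · rw [badCount_eq _ ((↑U : Set V) ∪ (Subtype.val '' c.supp)) ?_]
      · calc ((↑U : Set V) ∪ Subtype.val '' c.supp).ncard
            ≤ (↑U : Set V).ncard + (Subtype.val '' c.supp).ncard := Set.ncard_union_le _ _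
          _ ≤ U.card + k := by
              rw [Set.ncard_coe_finset, Set.ncard_image_of_injective _ Subtype.val_injective]
              exact Nat.add_le_add_left (hU c) _
      · intro w
        by_cases hw : w ∈ ((↑U : Set V)ᶜ)
        · rw [dif_pos hw]
          simp only [decide_eq_false_iff_not, not_not, Set.mem_union]
          constructor
          · intro h; exact Or.inr ⟨⟨w, hw⟩, h, rfl⟩
          · rintro (h | ⟨⟨w', hw'⟩, hmem, rfl⟩)
            · exact absurd h hw
            · exact hmem
        · have hw' : w ∈ (↑U : Set V) := by simpa using hw
          rw [dif_neg hw]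
          simp [hw']
    · have hmem : (⟨v, hv'⟩ : ((↑U : Set V)ᶜ : Set V)) ∈ c.supp := by
        rw [SimpleGraph.ConnectedComponent.mem_supp_iff]
      dsimp only
      rw [dif_pos hv']
      simp [hmem]

end Aux

/-- If the corrupt party's budget satisfies `b ≤ m(G)/2`, then after the edge-removal
procedure terminates (in `i` rounds, removing the set `R`), the remaining graph `H`
is nonempty and any largest connected component of `H` has size strictly greater than
the number `b - i` of corrupt vertices remaining in `H`; hence all its vertices are
truthful. -/
theorem largest_component_truthful {V : Type*} [Fintype V] [DecidableEq V] [Nonempty V]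
    (G : SimpleGraph V) (f : V → Bool) (rep : V → V → Bool) (b i : ℕ)
    (hb : b ≤ mNum G / 2)
    (R : Finset V) (p : Fin i → V × V)
    (hadj : ∀ j, G.Adj (p j).1 (p j).2)
    (hbadrep : ∀ j, rep (p j).1 (p j).2 = false ∨ rep (p j).2 (p j).1 = false)
    (hR : (↑R : Set V) = ⋃ j, {(p j).1, (p j).2})
    (hRcard : R.card = 2 * i)
    (hclean : ∀ u v : V, u ∉ R → v ∉ R → G.Adj u v → rep u v = true)
    (hcons : Consistent G f rep) (hbad : badCount f ≤ b) :
    ((↑R : Set V)ᶜ).Nonempty ∧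
    ∀ c : (G.induce ((↑R : Set V)ᶜ)).ConnectedComponent,
      (∀ c' : (G.induce ((↑R : Set V)ᶜ)).ConnectedComponent,
        c'.supp.ncard ≤ c.supp.ncard) →
      (({v : V | v ∉ R ∧ f v = false}.ncard ≤ b - i ∧ b - i < c.supp.ncard) ∧
        ∀ u : ((↑R : Set V)ᶜ : Set V), u ∈ c.supp → f ↑u = true) := by
  classical
  have hm : 2 * b ≤ mNum G := by
    have := (Nat.le_div_iff_mul_le (by norm_num : 0 < 2)).mp hb
    omega
  set P : Fin i → Finset V := fun j => {(p j).1, (p j).2} with hP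
  have hRb : R = Finset.univ.biUnion P := by
    ext v
    have hv := Set.ext_iff.mp hR v
    simp only [Finset.mem_coe, Set.mem_iUnion, Set.mem_insert_iff,
      Set.mem_singleton_iff] at hv
    simp only [Finset.mem_biUnion, Finset.mem_univ, true_and, hP,
      Finset.mem_insert, Finset.mem_singleton]
    exact hv
  have hF1 : ∀ j, f (p j).1 = false ∨ f (p j).2 = false := by
    intro j
    rcases hbadrep j with h | h
    · by_cases h1 : f (p j).1 = true
      · right; rw [← hcons _ _ (hadj j) h1, h]
      · left; simpa using h1
    · by_cases h1 : f (p j).2 = true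
      · left; rw [← hcons _ _ (hadj j).symm h1, h]
      · right; simpa using h1
  set g : Fin i → V := fun j => if f (p j).1 = false then (p j).1 else (p j).2 with hg
  have hgP : ∀ j, g j ∈ P j := by
    intro j
    by_cases h : f (p j).1 = false <;> simp [hg, h, hP]
  have hgbad : ∀ j, f (g j) = false := by
    intro j
    by_cases h : f (p j).1 = false
    · simp [hg, h]
    · simp only [hg, if_neg h]
      exact (hF1 j).resolve_left h
  have hPcard : ∀ j, (P j).card ≤ 2 := by
    intro j
    simp only [hP]
    exact (Finset.card_insert_le _ _).trans (by simp)
  have hginj : Function.Injective g := by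
    intro j j' hjj
    by_contra hne
    have hA : ((Finset.univ.erase j').biUnion P).card ≤ 2 * (i - 1) := by
      calc ((Finset.univ.erase j').biUnion P).card
          ≤ ∑ x ∈ Finset.univ.erase j', (P x).card := Finset.card_biUnion_le
        _ ≤ ∑ _x ∈ Finset.univ.erase j', 2 := Finset.sum_le_sum (fun x _ => hPcard x)
        _ = 2 * (i - 1) := by
            rw [Finset.sum_const, Finset.card_erase_of_mem (Finset.mem_univ j'),
              Finset.card_univ, Fintype.card_fin, smul_eq_mul]
            ring
    have hsplit : R = P j' ∪ (Finset.univ.erase j').biUnion P := by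
      rw [hRb]
      nth_rewrite 1 [← Finset.insert_erase (Finset.mem_univ j')]
      rw [Finset.biUnion_insert]
    have hmemA : g j ∈ (Finset.univ.erase j').biUnion P :=
      Finset.mem_biUnion.mpr ⟨j, Finset.mem_erase.mpr ⟨hne, Finset.mem_univ j⟩, hgP j⟩
    have hmemB : g j ∈ P j' := hjj ▸ hgP j'
    have hint : 1 ≤ (P j' ∩ (Finset.univ.erase j').biUnion P).card :=
      Finset.card_pos.mpr ⟨g j, Finset.mem_inter.mpr ⟨hmemB, hmemA⟩⟩
    have hu := Finset.card_union_add_card_inter (P j') ((Finset.univ.erase j').biUnion P)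
    rw [← hsplit, hRcard] at hu
    have := hPcard j'
    have hipos : 0 < i := j.pos
    omega
  set Bad := Finset.univ.filter (fun v => f v = false) with hBad
  have hbadc : badCount f = Bad.card := by
    rw [badCount, ← Set.ncard_coe_finset]
    congr 1
    ext v
    simp [hBad]
  have hgR : ∀ j, g j ∈ R := by
    intro j
    rw [hRb]
    exact Finset.mem_biUnion.mpr ⟨j, Finset.mem_univ j, hgP j⟩
  have hImg : Finset.univ.image g ⊆ Bad.filter (· ∈ R) := by
    intro x hx
    simp only [Finset.mem_image] at hx
    obtain ⟨j, _, rfl⟩ := hx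
    simp only [Finset.mem_filter, hBad, Finset.mem_univ, true_and]
    exact ⟨hgbad j, hgR j⟩
  have hin : i ≤ (Bad.filter (· ∈ R)).card := by
    have h := Finset.card_le_card hImg
    rwa [Finset.card_image_of_injective _ hginj, Finset.card_univ, Fintype.card_fin] at h
  have hsplitBad : (Bad.filter (· ∈ R)).card + (Bad.filter (fun v => ¬ v ∈ R)).card
      = Bad.card := Finset.card_filter_add_card_filter_not _
  have hib : i ≤ b := by omega
  have houtset : {v : V | v ∉ R ∧ f v = false}.ncard
      = (Bad.filter (fun v => ¬ v ∈ R)).card := by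
    rw [← Set.ncard_coe_finset]
    congr 1
    ext v
    simp only [Set.mem_setOf_eq, Finset.coe_filter, hBad, Finset.mem_filter,
      Finset.mem_univ, true_and, Set.mem_setOf_eq]
    tauto
  have hout : {v : V | v ∉ R ∧ f v = false}.ncard ≤ b - i := by
    rw [houtset]; omega
  have hne : ((↑R : Set V)ᶜ).Nonempty := by
    by_contra h
    rw [Set.not_nonempty_iff_eq_empty, Set.compl_empty_iff] at h
    have hRuniv : R = Finset.univ := Finset.coe_injective (by rw [h, Finset.coe_univ])
    have hcard : Fintype.card V = 2 * i := by
      rw [← hRcard, hRuniv, Finset.card_univ]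
    rcases Nat.eq_zero_or_pos i with h0 | h0
    · have := Fintype.card_pos (α := V); omega
    · have := mNum_le_card_sub_one G (by omega)
      omega
  refine ⟨hne, ?_⟩
  intro c hmax
  have hstep : ∀ a b' : ((↑R : Set V)ᶜ : Set V),
      (G.induce ((↑R : Set V)ᶜ)).Adj a b' → f ↑a = f ↑b' := by
    intro a b' hab
    have hadj' : G.Adj ↑a ↑b' := hab
    have haR : ↑a ∉ R := fun hmem => a.2 (Finset.mem_coe.mpr hmem)
    have hbR : (↑b' : V) ∉ R := fun hmem => b'.2 (Finset.mem_coe.mpr hmem)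
    cases hfa : f ↑a with
    | true =>
      rw [← hcons _ _ hadj' hfa, hclean _ _ haR hbR hadj']
    | false =>
      cases hfb : f ↑b' with
      | false => rfl
      | true =>
        have h := hcons _ _ hadj'.symm hfb
        rw [hclean _ _ hbR haR hadj'.symm, hfa] at h
        exact absurd h (by simp)
  have hmono : ∀ u w : ((↑R : Set V)ᶜ : Set V),
      (G.induce ((↑R : Set V)ᶜ)).Reachable u w → f ↑u = f ↑w := by
    intro u w hr
    obtain ⟨walk⟩ := hr
    induction walk with
    | nil => rfl
    | cons h q ih => exact (hstep _ _ h).trans ih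
  obtain ⟨x, hx⟩ := c.exists_rep
  have hxs : x ∈ c.supp := by
    rw [SimpleGraph.ConnectedComponent.mem_supp_iff]
    exact hx
  have hk1 : 1 ≤ c.supp.ncard := by
    rw [Nat.one_le_iff_ne_zero]
    intro h0
    rw [Set.ncard_eq_zero (Set.toFinite _)] at h0
    rw [h0] at hxs
    exact hxs
  have hmle : mNum G ≤ 2 * i + c.supp.ncard := by
    have := mNum_le_sep G R (c.supp.ncard) (fun c' => hmax c')
    rwa [hRcard] at this
  have hmain : b - i < c.supp.ncard := by omega
  refine ⟨⟨hout, hmain⟩, ?_⟩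
  have hex : ∃ u ∈ c.supp, f ↑u = true := by
    by_contra hno
    push_neg at hno
    have hsub : Subtype.val '' c.supp ⊆ {v : V | v ∉ R ∧ f v = false} := by
      rintro _ ⟨u, hu, rfl⟩
      refine ⟨fun hmem => u.2 (Finset.mem_coe.mpr hmem), ?_⟩
      have := hno u hu
      exact Bool.eq_false_iff.mpr this
    have hle := Set.ncard_le_ncard hsub (Set.toFinite _)
    rw [Set.ncard_image_of_injective _ Subtype.val_injective] at hle
    omega
  obtain ⟨w, hw, hfw⟩ := hex
  intro u hu
  rw [SimpleGraph.ConnectedComponent.mem_supp_iff] at hu hw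
  have hreach : (G.induce ((↑R : Set V)ᶜ)).Reachable u w :=
    SimpleGraph.ConnectedComponent.exact (hu.trans hw.symm)
  rw [hmono u w hreach, hfw]
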